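/- Let f ∈ H^{m−1/2}(𝕋²) for an integer m ≥ 1, let χ ∈ C_0^∞(ℝ) with χ = 1 on [−1,1], define f^{(1)}(x', x₃) = χ(x₃|D|)f(x') (Fourier multiplier in x') and ψ(x', x₃) = (1 − x₃²) f^{(1)}(x', x₃) on Ω = 𝕋² × (−1,1). Then ψ ∈ H^m(Ω) and there is a constant C (independent of f) with ‖ψ‖_{H^m(Ω)} ≤ C ‖f‖_{H^{m−1/2}(𝕋²)}. -/

import Mathlib

open intervalIntegral

/-- Squared modulus `|k|²` of a frequency `k ∈ ℤ²`. -/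
def freqSq (k : ℤ × ℤ) : ℝ := (k.1 : ℝ) ^ 2 + (k.2 : ℝ) ^ 2

/-- Modulus `|k|` of a frequency `k ∈ ℤ²`. -/
noncomputable def freqAbs (k : ℤ × ℤ) : ℝ := Real.sqrt (freqSq k)

/-- The squared `H^m(𝕋² × (−1,1))` norm of the lifting
`ψ(x',x₃) = (1−x₃²) χ(x₃|D|) f(x')`, computed on Fourier coefficients `c = (c_k(f))`:
`∑_{j=0}^m ∫_{−1}^1 ‖∂₃^j ψ(·,x₃)‖²_{H^{m−j}(𝕋²)} dx₃`, where the `k`-th Fourier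
coefficient of `ψ(·,x₃)` is `(1−x₃²) χ(x₃|k|) c_k`. -/
noncomputable def liftHmSq (m : ℕ) (χ : ℝ → ℝ) (c : ℤ × ℤ → ℂ) : ℝ :=
  ∑ j ∈ Finset.range (m + 1),
    ∫ t in (-1 : ℝ)..1,
      ∑' k : ℤ × ℤ, (1 + freqSq k) ^ ((m : ℝ) - j) * ‖c k‖ ^ 2 *
        (iteratedDeriv j (fun s => (1 - s ^ 2) * χ (s * freqAbs k)) t) ^ 2

open MeasureTheory

/-- The iterated derivative of the zero function vanishes. -/
lemma aux_zero_fun (i : ℕ) (t : ℝ) : iteratedDeriv i (fun _ : ℝ => (0:ℝ)) t = 0 := by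
  rw [iteratedDeriv_eq_iteratedFDeriv, iteratedFDeriv_zero_fun]; simp

/-- Derivatives of `1 - s²` are bounded by `2` on `[-1,1]`. -/
lemma aux_poly_bound (i : ℕ) (t : ℝ) (ht : t ∈ Set.Icc (-1:ℝ) 1) :
    ‖iteratedDeriv i (fun s : ℝ => 1 - s ^ 2) t‖ ≤ 2 := by
  obtain ⟨ht1, ht2⟩ := ht
  have h1 : deriv (fun s : ℝ => 1 - s ^ 2) = fun s => -2 * s := by
    ext s
    have := ((hasDerivAt_pow 2 s).const_sub 1).deriv
    simpa using this
  have h2 : deriv (fun s : ℝ => -2 * s) = fun _ => (-2 : ℝ) := by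
    ext s
    have := ((hasDerivAt_id s).const_mul (-2 : ℝ)).deriv
    simpa using this
  have h3 : deriv (fun _ : ℝ => (-2:ℝ)) = fun _ => (0:ℝ) := by
    ext s; simp
  match i with
  | 0 =>
    simp only [iteratedDeriv_zero]; rw [Real.norm_eq_abs, abs_le]
    constructor <;> nlinarith
  | 1 =>
    rw [iteratedDeriv_one, h1, Real.norm_eq_abs, abs_le]
    simp only
    constructor <;> nlinarith
  | 2 =>
    rw [show (2:ℕ) = 1 + 1 from rfl, iteratedDeriv_succ', h1, iteratedDeriv_one, h2]
    norm_num
  | (n+3) =>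
    rw [show n + 3 = (n + 2) + 1 from rfl, iteratedDeriv_succ', h1,
      show n + 2 = (n + 1) + 1 from rfl, iteratedDeriv_succ', h2,
      iteratedDeriv_succ', h3, aux_zero_fun]
    norm_num

/-- Scaling of iterated derivatives. -/
lemma aux_scale (χ : ℝ → ℝ) (hχ : ContDiff ℝ (⊤ : ℕ∞) χ) (a : ℝ) (l : ℕ) (t : ℝ) :
    iteratedDeriv l (fun s : ℝ => χ (s * a)) t = a ^ l * iteratedDeriv l χ (a * t) := by
  have : (fun s : ℝ => χ (s * a)) = fun s : ℝ => χ (a * s) := by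
    funext s; rw [mul_comm]
  rw [this, iteratedDeriv_comp_const_mul (hχ.of_le (by exact_mod_cast le_top)) a]

/-- Leibniz-type bound on derivatives of `(1-s²)·χ(s·a)` on `[-1,1]`. -/
lemma aux_leibniz_bound (m : ℕ) (χ : ℝ → ℝ) (hχ : ContDiff ℝ (⊤ : ℕ∞) χ) (M : ℝ)
    (hM : ∀ l, l ≤ m → ∀ y, ‖iteratedDeriv l χ y‖ ≤ M) (a : ℝ) (ha : 0 ≤ a)
    (j : ℕ) (hj : j ≤ m) (t : ℝ) (ht : t ∈ Set.Icc (-1:ℝ) 1) :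
    ‖iteratedDeriv j (fun s : ℝ => (1 - s ^ 2) * χ (s * a)) t‖ ≤ 2 * M * (1 + a) ^ j := by
  have hu : ContDiff ℝ (⊤ : ℕ∞) (fun s : ℝ => 1 - s ^ 2) :=
    contDiff_const.sub (contDiff_id.pow 2)
  have hv : ContDiff ℝ (⊤ : ℕ∞) (fun s : ℝ => χ (s * a)) :=
    hχ.comp (contDiff_id.mul contDiff_const)
  have key := norm_iteratedFDeriv_mul_le (𝕜 := ℝ) hu hv t (show ((j : ℕ) : WithTop ℕ∞) ≤ ((⊤ : ℕ∞) : WithTop ℕ∞) from by exact_mod_cast le_top)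
  rw [← norm_iteratedFDeriv_eq_norm_iteratedDeriv]
  refine key.trans ?_
  have hterm : ∀ i ∈ Finset.range (j + 1),
      (j.choose i : ℝ) * ‖iteratedFDeriv ℝ i (fun s : ℝ => 1 - s ^ 2) t‖ *
        ‖iteratedFDeriv ℝ (j - i) (fun s : ℝ => χ (s * a)) t‖ ≤
      (j.choose i : ℝ) * 2 * (a ^ (j - i) * M) := by
    intro i hi
    have h1 : ‖iteratedFDeriv ℝ i (fun s : ℝ => 1 - s ^ 2) t‖ ≤ 2 := by
      rw [norm_iteratedFDeriv_eq_norm_iteratedDeriv]; exact aux_poly_bound i t ht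
    have h2 : ‖iteratedFDeriv ℝ (j - i) (fun s : ℝ => χ (s * a)) t‖ ≤ a ^ (j - i) * M := by
      rw [norm_iteratedFDeriv_eq_norm_iteratedDeriv, aux_scale χ hχ a, norm_mul,
        norm_pow, Real.norm_of_nonneg ha]
      exact mul_le_mul_of_nonneg_left (hM _ (le_trans (Nat.sub_le j i) hj) _)
        (pow_nonneg ha _)
    rw [mul_assoc, mul_assoc]
    refine mul_le_mul_of_nonneg_left ?_ (by positivity)
    exact mul_le_mul h1 h2 (norm_nonneg _) (by norm_num)
  refine (Finset.sum_le_sum hterm).trans ?_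
  rw [show ((1:ℝ) + a) ^ j = ∑ i ∈ Finset.range (j + 1),
      (1:ℝ) ^ i * a ^ (j - i) * (j.choose i : ℝ) from by rw [add_pow]]
  rw [Finset.mul_sum]
  refine le_of_eq (Finset.sum_congr rfl fun i hi => by ring)

/-- Derivatives of `(1-s²)·χ(s·a)` vanish where `χ(s·a)` is outside the support. -/
lemma aux_support (χ : ℝ → ℝ) (R : ℝ) (hR : ∀ y, R < |y| → χ y = 0) (a : ℝ) (ha : 0 ≤ a)
    (j : ℕ) (t : ℝ) (hts : R < |t| * a) :
    iteratedDeriv j (fun s : ℝ => (1 - s ^ 2) * χ (s * a)) t = 0 := by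
  have hopen : IsOpen {s : ℝ | R < |s| * a} :=
    isOpen_lt continuous_const (continuous_abs.mul continuous_const)
  have hev : (fun s : ℝ => (1 - s ^ 2) * χ (s * a)) =ᶠ[nhds t] (fun _ => (0:ℝ)) :=
    Filter.eventuallyEq_of_mem (hopen.mem_nhds hts) (fun s hs => by
      have h0 : χ (s * a) = 0 := hR _ (by rw [abs_mul, abs_of_nonneg ha]; exact hs)
      simp [h0])
  rw [hev.iteratedDeriv_eq j, aux_zero_fun]

/-- The key one-dimensional integral bound, gaining half a power of `1 + a²`. -/
lemma aux_integral_bound (m : ℕ) (χ : ℝ → ℝ) (hχ : ContDiff ℝ (⊤ : ℕ∞) χ) (M R : ℝ)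
    (hM1 : 1 ≤ M) (hM : ∀ l, l ≤ m → ∀ y, ‖iteratedDeriv l χ y‖ ≤ M)
    (hR1 : 1 ≤ R) (hR : ∀ y, R < |y| → χ y = 0)
    (a : ℝ) (ha : 0 ≤ a) (j : ℕ) (hj : j ≤ m) :
    ∫ t in Set.Ioc (-1:ℝ) 1, (iteratedDeriv j (fun s : ℝ => (1 - s ^ 2) * χ (s * a)) t) ^ 2
      ≤ (4 * M ^ 2 * 2 ^ m * (2 * Real.sqrt 2 * R)) * (1 + a ^ 2) ^ ((j:ℝ) - 1/2) := by
  set D : ℝ → ℝ := iteratedDeriv j (fun s : ℝ => (1 - s ^ 2) * χ (s * a)) with hD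
  set P : ℝ := 4 * M ^ 2 * 2 ^ m with hP
  have hMpos : (0:ℝ) < M := lt_of_lt_of_le one_pos hM1
  have hRpos : (0:ℝ) < R := lt_of_lt_of_le one_pos hR1
  have hPpos : 0 < P := by positivity
  have hDb : ∀ t ∈ Set.Icc (-1:ℝ) 1, (D t) ^ 2 ≤ P * (1 + a ^ 2) ^ j := by
    intro t ht
    have h := aux_leibniz_bound m χ hχ M hM a ha j hj t ht
    have e2 : ((1:ℝ) + a) ^ 2 ≤ 2 * (1 + a ^ 2) := by nlinarith [sq_nonneg (1 - a)]
    have e3 : (((1:ℝ) + a) ^ j) ^ 2 ≤ (2 * (1 + a ^ 2)) ^ j := by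
      rw [← pow_mul, mul_comm j 2, pow_mul]
      exact pow_le_pow_left₀ (by positivity) e2 j
    calc (D t) ^ 2 = ‖D t‖ ^ 2 := by rw [Real.norm_eq_abs, sq_abs]
      _ ≤ (2 * M * (1 + a) ^ j) ^ 2 := pow_le_pow_left₀ (norm_nonneg _) h 2
      _ = 4 * M ^ 2 * ((1 + a) ^ j) ^ 2 := by ring
      _ ≤ 4 * M ^ 2 * (2 * (1 + a ^ 2)) ^ j := by
          exact mul_le_mul_of_nonneg_left e3 (by positivity)
      _ = 4 * M ^ 2 * 2 ^ j * (1 + a ^ 2) ^ j := by rw [mul_pow]; ring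
      _ ≤ P * (1 + a ^ 2) ^ j := by
          refine mul_le_mul_of_nonneg_right ?_ (by positivity)
          have h2 : (2:ℝ) ^ j ≤ 2 ^ m := pow_le_pow_right₀ one_le_two hj
          nlinarith [sq_nonneg M]
  set S : Set ℝ := {t : ℝ | |t| * a ≤ R} with hSdef
  have hS : MeasurableSet S :=
    (isClosed_le (continuous_abs.mul continuous_const) continuous_const).measurableSet
  have hpt : ∀ t ∈ Set.Ioc (-1:ℝ) 1, (D t) ^ 2 ≤ S.indicator (fun _ => P * (1 + a ^ 2) ^ j) t := by
    intro t ht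
    by_cases hts : t ∈ S
    · rw [Set.indicator_of_mem hts]; exact hDb t (Set.Ioc_subset_Icc_self ht)
    · rw [Set.indicator_of_notMem hts, hD,
        aux_support χ R hR a ha j t (not_le.mp hts)]
      norm_num
  have hgc : Continuous D := by
    have hg : ContDiff ℝ (⊤ : ℕ∞) (fun s : ℝ => (1 - s ^ 2) * χ (s * a)) :=
      (contDiff_const.sub (contDiff_id.pow 2)).mul (hχ.comp (contDiff_id.mul contDiff_const))
    exact hg.continuous_iteratedDeriv j (by exact_mod_cast le_top)
  have hD2int : IntegrableOn (fun t => (D t) ^ 2) (Set.Ioc (-1:ℝ) 1) :=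
    (hgc.pow 2).integrableOn_Ioc
  have hIind : IntegrableOn (S.indicator fun _ => P * (1 + a ^ 2) ^ j) (Set.Ioc (-1:ℝ) 1) :=
    (integrableOn_const (hs := measure_Ioc_lt_top.ne)).indicator hS
  have step3 : ∫ t in Set.Ioc (-1:ℝ) 1, (D t) ^ 2
      ≤ ∫ t in Set.Ioc (-1:ℝ) 1, S.indicator (fun _ => P * (1 + a ^ 2) ^ j) t :=
    setIntegral_mono_on hD2int hIind measurableSet_Ioc hpt
  have step4 : ∫ t in Set.Ioc (-1:ℝ) 1, S.indicator (fun _ => P * (1 + a ^ 2) ^ j) t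
      = (volume (Set.Ioc (-1:ℝ) 1 ∩ S)).toReal * (P * (1 + a ^ 2) ^ j) := by
    rw [setIntegral_indicator hS, setIntegral_const, smul_eq_mul, measureReal_def]
  have hsqpos : (0:ℝ) < Real.sqrt (1 + a ^ 2) := Real.sqrt_pos.mpr (by positivity)
  have hrw : ((1:ℝ) + a ^ 2) ^ (-(1/2):ℝ) = 1 / Real.sqrt (1 + a ^ 2) := by
    rw [Real.rpow_neg (by positivity), one_div, Real.sqrt_eq_rpow]
    norm_num
  have step5 : (volume (Set.Ioc (-1:ℝ) 1 ∩ S)).toReal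
      ≤ 2 * Real.sqrt 2 * R * ((1 + a ^ 2) ^ (-(1/2):ℝ)) := by
    rw [hrw]
    have hs2 : (0:ℝ) ≤ Real.sqrt 2 := Real.sqrt_nonneg 2
    rcases le_or_gt a 1 with hA | hA
    · have h1 : (volume (Set.Ioc (-1:ℝ) 1 ∩ S)).toReal ≤ 2 := by
        have hmono := measure_mono (μ := volume)
          (Set.inter_subset_left (s := Set.Ioc (-1:ℝ) 1) (t := S))
        have h2 := ENNReal.toReal_mono (by simp [Real.volume_Ioc]) hmono
        rw [Real.volume_Ioc] at h2
        simpa using h2.trans (by norm_num [ENNReal.toReal_ofReal])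
      refine h1.trans ?_
      rw [mul_one_div, le_div_iff₀ hsqpos]
      have h3 : Real.sqrt (1 + a ^ 2) ≤ Real.sqrt 2 := Real.sqrt_le_sqrt (by nlinarith)
      nlinarith
    · have hapos : (0:ℝ) < a := lt_trans one_pos hA
      have hsub : S ⊆ Set.Icc (-(R/a)) (R/a) := by
        intro t ht
        exact abs_le.mp ((le_div_iff₀ hapos).mpr ht)
      have h1 : (volume (Set.Ioc (-1:ℝ) 1 ∩ S)).toReal ≤ 2 * (R / a) := by
        have hmono := measure_mono (μ := volume)
          ((Set.inter_subset_right (s := Set.Ioc (-1:ℝ) 1)).trans hsub)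
        have h2 := ENNReal.toReal_mono (by simp [Real.volume_Icc]) hmono
        rw [Real.volume_Icc] at h2
        refine h2.trans (le_of_eq ?_)
        rw [ENNReal.toReal_ofReal (by rw [sub_neg_eq_add]; positivity)]
        ring
      refine h1.trans ?_
      rw [mul_one_div, show (2:ℝ) * (R / a) = (2 * R) / a from by ring,
        div_le_div_iff₀ hapos hsqpos]
      have h5 : Real.sqrt (1 + a ^ 2) ≤ Real.sqrt 2 * a := by
        rw [show Real.sqrt 2 * a = Real.sqrt (2 * a ^ 2) from by
          rw [Real.sqrt_mul (by norm_num), Real.sqrt_sq ha]]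
        exact Real.sqrt_le_sqrt (by nlinarith)
      nlinarith
  calc ∫ t in Set.Ioc (-1:ℝ) 1, (D t) ^ 2
      ≤ (volume (Set.Ioc (-1:ℝ) 1 ∩ S)).toReal * (P * (1 + a ^ 2) ^ j) := by
        rw [← step4]; exact step3
    _ ≤ (2 * Real.sqrt 2 * R * ((1 + a ^ 2) ^ (-(1/2):ℝ))) * (P * (1 + a ^ 2) ^ j) :=
        mul_le_mul_of_nonneg_right step5 (by positivity)
    _ = (P * (2 * Real.sqrt 2 * R)) * ((1 + a ^ 2) ^ ((j:ℝ) - 1/2)) := by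
        rw [← Real.rpow_natCast ((1:ℝ) + a ^ 2) j]
        have hmerge : ((1:ℝ) + a ^ 2) ^ (-(1/2):ℝ) * (1 + a ^ 2) ^ ((j:ℝ)) =
            (1 + a ^ 2) ^ ((j:ℝ) - 1/2) := by
          rw [← Real.rpow_add (by positivity : (0:ℝ) < 1 + a ^ 2)]
          ring_nf
        rw [← hmerge]; ring
    _ = (4 * M ^ 2 * 2 ^ m * (2 * Real.sqrt 2 * R)) * (1 + a ^ 2) ^ ((j:ℝ) - 1/2) := by rw [hP]

/-- Lifting lemma: for an integer `m ≥ 1`, `χ ∈ C_0^∞(ℝ)` with `χ = 1` on `[−1,1]`,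
and `f ∈ H^{m−1/2}(𝕋²)` with Fourier coefficients `c`, the lifting
`ψ(x',x₃) = (1−x₃²) χ(x₃|D|)f(x')` belongs to `H^m(𝕋² × (−1,1))` with
`‖ψ‖_{H^m} ≤ C ‖f‖_{H^{m−1/2}}`, `C` independent of `f`. -/
theorem lifting_gains_half_derivative (m : ℕ) (hm : 1 ≤ m) (χ : ℝ → ℝ)
    (hχ : ContDiff ℝ (⊤ : ℕ∞) χ) (hχc : HasCompactSupport χ)
    (hχ1 : ∀ s ∈ Set.Icc (-1 : ℝ) 1, χ s = 1) :
    ∃ C > 0, ∀ c : ℤ × ℤ → ℂ,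
      Summable (fun k : ℤ × ℤ => (1 + freqSq k) ^ ((m : ℝ) - 1 / 2) * ‖c k‖ ^ 2) →
      liftHmSq m χ c ≤
        C * ∑' k : ℤ × ℤ, (1 + freqSq k) ^ ((m : ℝ) - 1 / 2) * ‖c k‖ ^ 2 := by
  obtain ⟨R₀, hR₀⟩ : ∃ R₀ : ℝ, ∀ y, R₀ < |y| → χ y = 0 := by
    obtain ⟨r, hr⟩ := hχc.isBounded.subset_closedBall 0
    exact ⟨r, fun y hy => image_eq_zero_of_notMem_tsupport (fun hmem => by
      have := hr hmem
      rw [Metric.mem_closedBall, Real.dist_eq, sub_zero] at this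
      exact absurd this (not_le.mpr hy))⟩
  set R : ℝ := max 1 R₀ with hRdef
  have hR1 : (1:ℝ) ≤ R := le_max_left _ _
  have hR : ∀ y, R < |y| → χ y = 0 := fun y hy => hR₀ y (lt_of_le_of_lt (le_max_right _ _) hy)
  have hMl : ∀ l : ℕ, ∃ Cl : ℝ, ∀ y, ‖iteratedDeriv l χ y‖ ≤ Cl := by
    intro l
    have h1 : HasCompactSupport (iteratedDeriv l χ) := by
      have : iteratedDeriv l χ =
          (fun L : ContinuousMultilinearMap ℝ (fun _ : Fin l => ℝ) ℝ => L (fun _ => 1)) ∘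
            iteratedFDeriv ℝ l χ := by
        funext x; simp [iteratedDeriv_eq_iteratedFDeriv, Function.comp]
      rw [this]
      exact (hχc.iteratedFDeriv l).comp_left (by simp)
    exact h1.exists_bound_of_continuous (hχ.continuous_iteratedDeriv l (by exact_mod_cast le_top))
  choose Cf hCf using hMl
  set M : ℝ := max 1 ((Finset.range (m+1)).sup' ⟨0, by simp⟩ Cf) with hMdef
  have hM1 : (1:ℝ) ≤ M := le_max_left _ _
  have hMpos : (0:ℝ) < M := lt_of_lt_of_le one_pos hM1
  have hRpos : (0:ℝ) < R := lt_of_lt_of_le one_pos hR1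
  have hM : ∀ l, l ≤ m → ∀ y, ‖iteratedDeriv l χ y‖ ≤ M := fun l hl y =>
    (hCf l y).trans ((Finset.le_sup' Cf (Finset.mem_range.mpr (by omega))).trans (le_max_right _ _))
  set Q : ℝ := 4 * M ^ 2 * 2 ^ m * (2 * Real.sqrt 2 * R) with hQdef
  have hQpos : 0 < Q := by
    have h2 : (0:ℝ) < Real.sqrt 2 := Real.sqrt_pos.mpr (by norm_num)
    positivity
  refine ⟨(m + 1 : ℝ) * Q, by positivity, ?_⟩
  intro c hc
  have hfs : ∀ k : ℤ × ℤ, 0 ≤ freqSq k := fun k => by unfold freqSq; positivity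
  have h1s : ∀ k : ℤ × ℤ, (0:ℝ) < 1 + freqSq k := fun k => by
    have := hfs k; linarith
  set b : ℤ × ℤ → ℝ := fun k => (1 + freqSq k) ^ ((m : ℝ) - 1 / 2) * ‖c k‖ ^ 2 with hbdef
  have hb0 : ∀ k, 0 ≤ b k := fun k =>
    mul_nonneg (Real.rpow_nonneg (le_of_lt (h1s k)) _) (sq_nonneg _)
  have hjsum : ∀ j ∈ Finset.range (m + 1),
      (∫ t in (-1 : ℝ)..1,
        ∑' k : ℤ × ℤ, (1 + freqSq k) ^ ((m : ℝ) - j) * ‖c k‖ ^ 2 *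
          (iteratedDeriv j (fun s => (1 - s ^ 2) * χ (s * freqAbs k)) t) ^ 2)
      ≤ Q * ∑' k, b k := by
    intro j hj
    have hjle : j ≤ m := Nat.lt_succ_iff.mp (Finset.mem_range.mp hj)
    set F : (ℤ × ℤ) → ℝ → ℝ := fun k t =>
      (1 + freqSq k) ^ ((m : ℝ) - j) * ‖c k‖ ^ 2 *
        (iteratedDeriv j (fun s => (1 - s ^ 2) * χ (s * freqAbs k)) t) ^ 2 with hFdef
    have hFnn : ∀ k t, 0 ≤ F k t := fun k t =>
      mul_nonneg (mul_nonneg (Real.rpow_nonneg (le_of_lt (h1s k)) _) (sq_nonneg _)) (sq_nonneg _)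
    have key : ∀ k, ∫ t in Set.Ioc (-1:ℝ) 1, F k t ≤ Q * b k := by
      intro k
      have ha : 0 ≤ freqAbs k := Real.sqrt_nonneg _
      have ha2 : freqAbs k ^ 2 = freqSq k := Real.sq_sqrt (hfs k)
      have hI := aux_integral_bound m χ hχ M R hM1 hM hR1 hR (freqAbs k) ha j hjle
      rw [ha2] at hI
      have hw : (0:ℝ) ≤ (1 + freqSq k) ^ ((m : ℝ) - j) * ‖c k‖ ^ 2 :=
        mul_nonneg (Real.rpow_nonneg (le_of_lt (h1s k)) _) (sq_nonneg _)
      calc ∫ t in Set.Ioc (-1:ℝ) 1, F k t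
          = (1 + freqSq k) ^ ((m : ℝ) - j) * ‖c k‖ ^ 2 *
            ∫ t in Set.Ioc (-1:ℝ) 1,
              (iteratedDeriv j (fun s => (1 - s ^ 2) * χ (s * freqAbs k)) t) ^ 2 := by
            rw [hFdef, MeasureTheory.integral_const_mul]
        _ ≤ (1 + freqSq k) ^ ((m : ℝ) - j) * ‖c k‖ ^ 2 * (Q * (1 + freqSq k) ^ ((j:ℝ) - 1/2)) :=
            mul_le_mul_of_nonneg_left hI hw
        _ = Q * b k := by
            have hmerge : (1 + freqSq k) ^ ((m : ℝ) - j) * (1 + freqSq k) ^ ((j:ℝ) - 1/2) =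
                (1 + freqSq k) ^ ((m : ℝ) - 1/2) := by
              rw [← Real.rpow_add (h1s k)]; ring_nf
            simp only [hbdef]; rw [← hmerge]; ring
    have hFc : ∀ k, Continuous (F k) := by
      intro k
      have hg : ContDiff ℝ (⊤ : ℕ∞) (fun s : ℝ => (1 - s ^ 2) * χ (s * freqAbs k)) :=
        (contDiff_const.sub (contDiff_id.pow 2)).mul (hχ.comp (contDiff_id.mul contDiff_const))
      exact continuous_const.mul ((hg.continuous_iteratedDeriv j (by exact_mod_cast le_top)).pow 2)
    have hint : ∀ k, IntegrableOn (F k) (Set.Ioc (-1:ℝ) 1) := fun k => (hFc k).integrableOn_Ioc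
    have hnormF : ∀ k, (fun t => ‖F k t‖) = F k := fun k =>
      funext fun t => Real.norm_of_nonneg (hFnn k t)
    have hsum2 : Summable (fun k => ∫ t in Set.Ioc (-1:ℝ) 1, F k t) :=
      Summable.of_nonneg_of_le (fun k => integral_nonneg (fun t => hFnn k t)) key (hc.mul_left Q)
    have hsum2' : Summable (fun k => ∫ t in Set.Ioc (-1:ℝ) 1, ‖F k t‖) := by
      simp only [hnormF]; exact hsum2
    have hswap : ∫ t in Set.Ioc (-1:ℝ) 1, ∑' k, F k t = ∑' k, ∫ t in Set.Ioc (-1:ℝ) 1, F k t :=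
      (integral_tsum_of_summable_integral_norm hint hsum2').symm
    calc (∫ t in (-1 : ℝ)..1, ∑' k, F k t)
        = ∫ t in Set.Ioc (-1:ℝ) 1, ∑' k, F k t := integral_of_le (by norm_num)
      _ = ∑' k, ∫ t in Set.Ioc (-1:ℝ) 1, F k t := hswap
      _ ≤ ∑' k, Q * b k := Summable.tsum_le_tsum key hsum2 (hc.mul_left Q)
      _ = Q * ∑' k, b k := tsum_mul_left
  calc liftHmSq m χ c ≤ ∑ j ∈ Finset.range (m + 1), Q * ∑' k, b k := by
        rw [liftHmSq]; exact Finset.sum_le_sum hjsum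
    _ = (m + 1 : ℝ) * Q * ∑' k, b k := by
        rw [Finset.sum_const, Finset.card_range]
        push_cast
        ring
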